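/- arXiv:2109.03129 — 4 statements merged into one kernel-verified Lean document; each statement's English description precedes it below -/
import Mathlib

section
/- For all n, e ∈ ℕ with 1 ≤ e ≤ ⌊n²/4⌋, one has s(n,e) − s_b(n,e) ≤ ((1 + 16·e^{−3/4})/e^{3/4}) · s(n,e). -/
/-!
A graph with `e` edges has spread at most `2√e`: for its extreme eigenvalues,
`(λ₁ - λₙ)² ≤ 2 (λ₁² + λₙ²) ≤ 2 ∑ λᵢ² = 2 tr A² = 4e`. Conversely, if every edge of a graph joins
two disjoint vertex sets `S` and `T`, testing the Rayleigh quotient on the vectors equal to `√|T|`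
on `S` and to `±√|S|` on `T` gives `λ₁ ≥ e / √(|S||T|) ≥ -λₙ`.

For the bipartite side, let `p` be least with `4e ≤ p²` (so `p ≤ n`) and split `p = a + b` with
`a` least such that `ab ≥ e`. Minimality of `a` gives `(a - 1)(b + 1) < e`, so the excess
`δ = ab - e` is at most `b - a`, whence `δ² + 4e ≤ (b - a)² + 4ab = p²`; minimality of `p` then
gives `δ⁴ ≤ 16e`. Any `e` edges of the complete bipartite graph between sets of sizes `a` and `b`
form a bipartite graph of spread at least `2e / √(e + δ)`, and as `δ ≤ 2e^{1/4}`, `2√e` exceeds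
this by at most `e^{-3/4}` times it.
-/

open scoped Classical in
noncomputable def adjMat {n : ℕ} (G : SimpleGraph (Fin n)) : Matrix (Fin n) (Fin n) ℝ :=
  fun i j => if G.Adj i j then 1 else 0

lemma adjMat_isHermitian {n : ℕ} (G : SimpleGraph (Fin n)) :
    (adjMat G).IsHermitian := by
  classical
  unfold Matrix.IsHermitian
  ext i j
  simp only [Matrix.conjTranspose_apply, adjMat]
  rw [show star (if G.Adj j i then (1:ℝ) else 0) = (if G.Adj j i then (1:ℝ) else 0) from
    star_trivial _]
  exact if_congr (G.adj_comm j i) rfl rfl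

noncomputable def graphEigs {n : ℕ} (G : SimpleGraph (Fin n)) : Fin n → ℝ :=
  (adjMat_isHermitian G).eigenvalues

/-- `λ₁(G)`, the largest adjacency eigenvalue. -/
noncomputable def lamMax {n : ℕ} (G : SimpleGraph (Fin n)) : ℝ := ⨆ i, graphEigs G i

/-- `λₙ(G)`, the smallest adjacency eigenvalue. -/
noncomputable def lamMin {n : ℕ} (G : SimpleGraph (Fin n)) : ℝ := ⨅ i, graphEigs G i

/-- The spread `s(G) = λ₁(G) - λₙ(G)`. -/
noncomputable def spread {n : ℕ} (G : SimpleGraph (Fin n)) : ℝ := lamMax G - lamMin G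

/-- `s(n,e)`: the maximum spread over all simple graphs on `n` vertices with `e` edges. -/
noncomputable def spreadMaxNE (n e : ℕ) : ℝ :=
  ⨆ G : {G : SimpleGraph (Fin n) // G.edgeSet.ncard = e}, spread G.1

/-- `s_b(n,e)`: the maximum spread over all bipartite simple graphs on `n` vertices
with `e` edges (bipartite = 2-colorable). -/
noncomputable def spreadMaxBipNE (n e : ℕ) : ℝ :=
  ⨆ G : {G : SimpleGraph (Fin n) // G.edgeSet.ncard = e ∧ G.Colorable 2}, spread G.1

open Matrix Finset

namespace Matrix.IsHermitian

open scoped MatrixOrder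

variable {ι : Type*} [Fintype ι] [DecidableEq ι] {A : Matrix ι ι ℝ}

theorem dotProduct_mulVec_le_of_eigenvalues_le (hA : A.IsHermitian) {r : ℝ}
    (h : ∀ i, hA.eigenvalues i ≤ r) (x : ι → ℝ) : x ⬝ᵥ (A *ᵥ x) ≤ r * (x ⬝ᵥ x) := by
  have hle : A ≤ algebraMap ℝ (Matrix ι ι ℝ) r :=
    le_algebraMap_of_spectrum_le (by simpa [hA.spectrum_real_eq_range_eigenvalues])
      hA.isSelfAdjoint
  have := (nonneg_iff_posSemidef.mp (sub_nonneg.mpr hle)).dotProduct_mulVec_nonneg x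
  simpa [sub_mulVec, Algebra.algebraMap_eq_smul_one, smul_mulVec, dotProduct_smul] using this

theorem le_dotProduct_mulVec_of_le_eigenvalues (hA : A.IsHermitian) {r : ℝ}
    (h : ∀ i, r ≤ hA.eigenvalues i) (x : ι → ℝ) : r * (x ⬝ᵥ x) ≤ x ⬝ᵥ (A *ᵥ x) := by
  have hle : algebraMap ℝ (Matrix ι ι ℝ) r ≤ A :=
    algebraMap_le_of_le_spectrum (by simpa [hA.spectrum_real_eq_range_eigenvalues])
      hA.isSelfAdjoint
  have := (nonneg_iff_posSemidef.mp (sub_nonneg.mpr hle)).dotProduct_mulVec_nonneg x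
  simpa [sub_mulVec, Algebra.algebraMap_eq_smul_one, smul_mulVec, dotProduct_smul] using this

theorem sum_eigenvalues_sq (hA : A.IsHermitian) : ∑ i, hA.eigenvalues i ^ 2 = (A * A).trace := by
  conv_rhs => rw [hA.spectral_theorem, ← map_mul, Unitary.conjStarAlgAut_apply, trace_mul_cycle,
    Unitary.coe_star_mul_self, one_mul, diagonal_mul_diagonal, trace_diagonal]
  simp [sq]

end Matrix.IsHermitian

theorem sq_ciSup_sub_ciInf_le {ι : Type*} [Fintype ι] (f : ι → ℝ) :
    ((⨆ i, f i) - ⨅ i, f i) ^ 2 ≤ 2 * ∑ i, f i ^ 2 := by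
  classical
  rcases isEmpty_or_nonempty ι with hι | hι
  · simp
  obtain ⟨i, hi⟩ := exists_eq_ciSup_of_finite (f := f)
  obtain ⟨k, hk⟩ := exists_eq_ciInf_of_finite (f := f)
  rw [← hi, ← hk]
  by_cases hik : i = k
  · rw [hik, sub_self, zero_pow two_ne_zero]; positivity
  have hpair : f i ^ 2 + f k ^ 2 ≤ ∑ j, f j ^ 2 := by
    rw [← sum_pair (f := fun j => f j ^ 2) hik]
    exact sum_le_sum_of_subset_of_nonneg (subset_univ _) fun j _ _ => sq_nonneg (f j)
  nlinarith [sq_nonneg (f i + f k)]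

section BipartiteVector

variable {V : Type*} [Fintype V] [DecidableEq V]

noncomputable def bipartiteVector (s t : Finset V) (α β : ℝ) (v : V) : ℝ :=
  if v ∈ s then α else if v ∈ t then β else 0

theorem dotProduct_self_bipartiteVector {s t : Finset V} (hst : Disjoint s t) (α β : ℝ) :
    bipartiteVector s t α β ⬝ᵥ bipartiteVector s t α β = #s * α ^ 2 + #t * β ^ 2 := by
  set x := bipartiteVector s t α β
  have hterm : ∀ v, x v * x v = (if v ∈ s then α ^ 2 else 0) + (if v ∈ t then β ^ 2 else 0) := by
    intro v
    by_cases hs : v ∈ s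
    · simp [x, bipartiteVector, hs, Finset.disjoint_left.mp hst hs, sq]
    by_cases ht : v ∈ t <;> simp [x, bipartiteVector, hs, ht, sq]
  rw [dotProduct, sum_congr rfl fun v _ => hterm v, sum_add_distrib, sum_ite_mem, sum_ite_mem,
    univ_inter, univ_inter, sum_const, sum_const, nsmul_eq_mul, nsmul_eq_mul]

end BipartiteVector

namespace SimpleGraph

theorem IsBipartiteWith.mono {V : Type*} {G H : SimpleGraph V} {s t : Set V}
    (h : H.IsBipartiteWith s t) (hGH : G ≤ H) : G.IsBipartiteWith s t :=
  ⟨h.disjoint, fun _ _ hvw => h.mem_of_adj (hGH hvw)⟩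

variable {V : Type*} [Fintype V] (G : SimpleGraph V) [DecidableRel G.Adj]

theorem ncard_edgeSet : G.edgeSet.ncard = #G.edgeFinset := by
  rw [← coe_edgeFinset, Set.ncard_coe_finset]

theorem trace_adjMatrix_mul_self [DecidableEq V] :
    (G.adjMatrix ℝ * G.adjMatrix ℝ).trace = 2 * #G.edgeFinset := by
  simp only [trace, Matrix.diag, adjMatrix_mul_self_apply_self]
  exact_mod_cast sum_degrees_eq_twice_card_edges G

variable {G} {s t : Finset V}

theorem IsBipartiteWith.dotProduct_adjMatrix_mulVec [DecidableEq V] (h : G.IsBipartiteWith s t)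
    (α β : ℝ) :
    bipartiteVector s t α β ⬝ᵥ (G.adjMatrix ℝ *ᵥ bipartiteVector s t α β) =
      2 * α * β * #G.edgeFinset := by
  set x := bipartiteVector s t α β
  have hst : Disjoint s t := disjoint_coe.mp h.disjoint
  have hterm : ∀ v, x v * (G.adjMatrix ℝ *ᵥ x) v =
      (if v ∈ s then α * β * G.degree v else 0) + (if v ∈ t then α * β * G.degree v else 0) := by
    intro v
    rw [adjMatrix_mulVec_apply]
    by_cases hs : v ∈ s
    · have hx : ∀ u ∈ G.neighborFinset v, x u = β := fun u hu => by
        have hut : u ∈ t := h.mem_of_mem_adj hs ((mem_neighborFinset G v u).mp hu)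
        simp [x, bipartiteVector, hut, Finset.disjoint_right.mp hst hut]
      rw [sum_congr rfl hx, sum_const, card_neighborFinset_eq_degree, nsmul_eq_mul]
      simp [x, bipartiteVector, hs, Finset.disjoint_left.mp hst hs]
      ring
    by_cases ht : v ∈ t
    · have hx : ∀ u ∈ G.neighborFinset v, x u = α := fun u hu => by
        have hus : u ∈ s := h.symm.mem_of_mem_adj ht ((mem_neighborFinset G v u).mp hu)
        simp [x, bipartiteVector, hus]
      rw [sum_congr rfl hx, sum_const, card_neighborFinset_eq_degree, nsmul_eq_mul]
      simp [x, bipartiteVector, hs, ht]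
      ring
    · simp [x, bipartiteVector, hs, ht]
  rw [dotProduct, sum_congr rfl fun v _ => hterm v, sum_add_distrib, sum_ite_mem, sum_ite_mem,
    univ_inter, univ_inter, ← mul_sum, ← mul_sum, ← Nat.cast_sum, ← Nat.cast_sum,
    isBipartiteWith_sum_degrees_eq_card_edges h, isBipartiteWith_sum_degrees_eq_card_edges' h]
  ring

theorem ncard_edgeSet_top_between (hst : Disjoint s t) :
    ((⊤ : SimpleGraph V).between ↑s ↑t).edgeSet.ncard = #s * #t := by
  classical
  have hK := between_isBipartiteWith (G := ⊤) (disjoint_coe.mpr hst)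
  have hdeg : ∀ v ∈ s, ((⊤ : SimpleGraph V).between ↑s ↑t).degree v = #t := fun v hv => by
    rw [← card_neighborFinset_eq_degree, isBipartiteWith_neighborFinset hK hv,
      filter_true_of_mem fun w hw =>
        ⟨(Finset.disjoint_left.mp hst hv <| · ▸ hw), Or.inl ⟨hv, hw⟩⟩]
  rw [ncard_edgeSet, ← isBipartiteWith_sum_degrees_eq_card_edges hK, sum_congr rfl hdeg,
    sum_const, smul_eq_mul]

theorem exists_isBipartiteWith_ncard_edgeSet_eq [DecidableEq V] {a b e : ℕ}
    (hab : a + b ≤ Fintype.card V) (he : e ≤ a * b) : ∃ (G : SimpleGraph V) (s t : Finset V),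
      #s = a ∧ #t = b ∧ G.IsBipartiteWith ↑s ↑t ∧ G.edgeSet.ncard = e := by
  obtain ⟨s, -, hs⟩ := Finset.exists_subset_card_eq (s := (univ : Finset V)) (n := a)
    (by simp; omega)
  obtain ⟨t, hts, ht⟩ := Finset.exists_subset_card_eq (s := univ \ s) (n := b)
    (by rw [card_sdiff_of_subset (subset_univ s), card_univ]; omega)
  have hst : Disjoint s t := disjoint_of_subset_right hts disjoint_sdiff
  set K := (⊤ : SimpleGraph V).between ↑s ↑t
  obtain ⟨S, hSK, hS⟩ := Set.exists_subset_card_eq (s := K.edgeSet) (n := e)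
    (by rwa [ncard_edgeSet_top_between hst, hs, ht])
  refine ⟨K.deleteEdges (K.edgeSet \ S), s, t, hs, ht,
    (between_isBipartiteWith (disjoint_coe.mpr hst)).mono (deleteEdges_le _), ?_⟩
  rw [edgeSet_deleteEdges, Set.sdiff_sdiff_cancel_left hSK, hS]

end SimpleGraph

section Spread

variable {n : ℕ} {G : SimpleGraph (Fin n)}

theorem adjMat_eq_adjMatrix [DecidableRel G.Adj] : adjMat G = G.adjMatrix ℝ := by
  ext i j
  simp [adjMat, SimpleGraph.adjMatrix_apply]

theorem sum_graphEigs_sq : ∑ i, graphEigs G i ^ 2 = 2 * G.edgeSet.ncard := by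
  classical
  rw [graphEigs, (adjMat_isHermitian G).sum_eigenvalues_sq, adjMat_eq_adjMatrix,
    SimpleGraph.trace_adjMatrix_mul_self, SimpleGraph.ncard_edgeSet]

theorem spread_le_two_sqrt : spread G ≤ 2 * √(G.edgeSet.ncard) := by
  have h := sq_ciSup_sub_ciInf_le (graphEigs G)
  rw [sum_graphEigs_sq, ← mul_assoc, show (2 * 2 : ℝ) = 2 ^ 2 by norm_num] at h
  calc spread G ≤ |spread G| := le_abs_self _
    _ ≤ √(2 ^ 2 * G.edgeSet.ncard) := Real.abs_le_sqrt h
    _ = 2 * √(G.edgeSet.ncard) := by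
      rw [Real.sqrt_mul (by norm_num), Real.sqrt_sq (by norm_num)]

theorem le_spread_of_isBipartiteWith {s t : Finset (Fin n)} (h : G.IsBipartiteWith ↑s ↑t)
    (hs : s.Nonempty) (ht : t.Nonempty) :
    2 * G.edgeSet.ncard / √(#s * #t) ≤ spread G := by
  classical
  have hA := adjMat_isHermitian G
  set E : ℝ := (G.edgeSet.ncard : ℝ)
  set r := √((#s : ℝ) * #t) with hr_def
  have hr : 0 < r := Real.sqrt_pos.mpr (by simp [hs.card_pos, ht.card_pos])
  have hr2 : r ^ 2 = #s * #t := Real.sq_sqrt (by positivity)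
  have hsplit : r = √(#t : ℝ) * √(#s : ℝ) := by
    rw [hr_def, Real.sqrt_mul (by positivity), mul_comm]
  have hdisj : Disjoint s t := disjoint_coe.mp h.disjoint
  set x : ℝ → Fin n → ℝ := fun σ => bipartiteVector s t √(#t : ℝ) (σ * √(#s : ℝ))
  have hnorm : ∀ σ : ℝ, σ ^ 2 = 1 → x σ ⬝ᵥ x σ = 2 * r ^ 2 := by
    intro σ hσ
    rw [dotProduct_self_bipartiteVector hdisj, hr2, mul_pow, hσ, Real.sq_sqrt (by positivity),
      Real.sq_sqrt (by positivity)]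
    ring
  have hquad : ∀ σ : ℝ, x σ ⬝ᵥ (adjMat G *ᵥ x σ) = 2 * σ * r * E := by
    intro σ
    rw [adjMat_eq_adjMatrix, h.dotProduct_adjMatrix_mulVec, ← SimpleGraph.ncard_edgeSet, hsplit]
    ring
  have hmax : E / r ≤ lamMax G := by
    have := hA.dotProduct_mulVec_le_of_eigenvalues_le (r := lamMax G)
      (fun i => le_ciSup (Set.finite_range (graphEigs G)).bddAbove i) (x 1)
    rw [hquad, hnorm 1 (one_pow 2)] at this
    rw [div_le_iff₀ hr]
    nlinarith
  have hmin : lamMin G ≤ -(E / r) := by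
    have := hA.le_dotProduct_mulVec_of_le_eigenvalues (r := lamMin G)
      (fun i => ciInf_le (Set.finite_range (graphEigs G)).bddBelow i) (x (-1))
    rw [hquad, hnorm (-1) (by norm_num)] at this
    rw [← neg_div, le_div_iff₀ hr]
    nlinarith
  rw [spread, mul_div_assoc]
  linarith

end Spread

theorem exists_mul_eq_add_of_four_mul_le_sq {p e : ℕ} (h : 4 * e ≤ p ^ 2) :
    ∃ a b δ, a + b = p ∧ a * b = e + δ ∧ δ ^ 2 + 4 * e ≤ p ^ 2 := by
  have hmid : e ≤ p / 2 * (p - p / 2) := by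
    obtain ⟨q, rfl | rfl⟩ := Nat.even_or_odd' p
    · rw [show 2 * q / 2 = q by omega, show 2 * q - q = q by omega]; nlinarith
    · rw [show (2 * q + 1) / 2 = q by omega, show 2 * q + 1 - q = q + 1 by omega]; nlinarith
  classical
  have hex : ∃ a, e ≤ a * (p - a) := ⟨_, hmid⟩
  obtain ⟨a, ha, hmin⟩ : ∃ a, e ≤ a * (p - a) ∧ ∀ c < a, ¬ e ≤ c * (p - c) :=
    ⟨Nat.find hex, Nat.find_spec hex, fun _ => Nat.find_min hex⟩
  obtain ⟨d, rfl⟩ : ∃ d, p = 2 * a + d :=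
    ⟨p - 2 * a, by by_contra hne; exact hmin _ (by omega) hmid⟩
  rw [show 2 * a + d - a = a + d by omega] at ha
  have hδd : a * (a + d) ≤ e + d := by
    obtain _ | c := a
    · simp
    have hlt := hmin c (by omega)
    rw [not_le, show 2 * (c + 1) + d - c = c + d + 2 by omega] at hlt
    nlinarith
  obtain ⟨δ, hδ⟩ : ∃ δ, a * (a + d) = e + δ := ⟨_, (Nat.add_sub_of_le ha).symm⟩
  refine ⟨a, a + d, δ, by omega, hδ, ?_⟩
  have : δ ^ 2 ≤ d ^ 2 := Nat.pow_le_pow_left (by omega) 2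
  nlinarith

theorem exists_add_le_mul_eq_add_pow_four_le {n e : ℕ} (h : 4 * e ≤ n ^ 2) :
    ∃ a b δ, a + b ≤ n ∧ a * b = e + δ ∧ δ ^ 4 ≤ 16 * e := by
  classical
  have hex : ∃ p, 4 * e ≤ p ^ 2 := ⟨n, h⟩
  obtain ⟨p, hp, hpn, hmin⟩ : ∃ p, 4 * e ≤ p ^ 2 ∧ p ≤ n ∧ ∀ q < p, ¬ 4 * e ≤ q ^ 2 :=
    ⟨Nat.find hex, Nat.find_spec hex, Nat.find_min' hex h, fun _ => Nat.find_min hex⟩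
  obtain ⟨a, b, δ, rfl, habe, hδ⟩ := exists_mul_eq_add_of_four_mul_le_sq hp
  refine ⟨a, b, δ, hpn, habe, ?_⟩
  cases hp : a + b with
  | zero =>
    rw [hp] at hδ
    have : δ = 0 := by nlinarith
    simp [this]
  | succ m =>
    have hlt := hmin m (by omega)
    rw [hp] at hδ
    have hδm : δ ^ 2 ≤ 2 * m := by nlinarith
    nlinarith [Nat.pow_le_pow_left hδm 2]

theorem spread_le_spreadMaxNE {n e : ℕ} {G : SimpleGraph (Fin n)} (hG : G.edgeSet.ncard = e) :
    spread G ≤ spreadMaxNE n e :=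
  le_ciSup (f := fun G : {G : SimpleGraph (Fin n) // G.edgeSet.ncard = e} => spread G.1)
    (Set.finite_range _).bddAbove ⟨G, hG⟩

theorem spread_le_spreadMaxBipNE {n e : ℕ} {G : SimpleGraph (Fin n)} (hG : G.edgeSet.ncard = e)
    (hbip : G.Colorable 2) : spread G ≤ spreadMaxBipNE n e :=
  le_ciSup (f := fun G : {G : SimpleGraph (Fin n) // G.edgeSet.ncard = e ∧ G.Colorable 2} =>
    spread G.1) (Set.finite_range _).bddAbove ⟨G, hG, hbip⟩

theorem spreadMaxNE_le_two_sqrt (n e : ℕ) : spreadMaxNE n e ≤ 2 * √e :=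
  Real.iSup_le (fun G => spread_le_two_sqrt.trans_eq (by rw [G.2])) (by positivity)

theorem le_two_mul_rpow_of_pow_four_le {x E : ℝ} (hx : 0 ≤ x) (hE : 0 ≤ E)
    (h : x ^ 4 ≤ 16 * E) : x ≤ 2 * E ^ ((1 : ℝ) / 4) := by
  have hroot : (2 * E ^ ((1 : ℝ) / 4)) ^ 4 = 16 * E := by
    rw [mul_pow, ← Real.rpow_natCast (E ^ _), ← Real.rpow_mul hE]
    norm_num
  exact (pow_le_pow_iff_left₀ hx (by positivity) four_ne_zero).mp (hroot ▸ h)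

theorem rpow_one_div_four_le {E : ℝ} (hE : 0 < E) :
    E ^ ((1 : ℝ) / 4) ≤ (1 + 16 * E ^ (-(3 : ℝ) / 4)) / E ^ ((3 : ℝ) / 4) * E := by
  rw [div_mul_eq_mul_div, mul_div_assoc, ← Real.rpow_one_sub' hE.le (by norm_num),
    show (1 : ℝ) - 3 / 4 = 1 / 4 by norm_num]
  exact le_mul_of_one_le_left (by positivity) (le_add_of_nonneg_right (by positivity))

theorem sqrt_sub_div_sqrt_le {E M c : ℝ} (hE : 0 < E) (hM : 0 < M) (hc : 0 ≤ c)
    (hME : M ≤ (1 + 2 * c) * E) : √E - E / √M ≤ c * (E / √M) := by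
  have hsq : (√E * √M) ^ 2 ≤ ((1 + c) * E) ^ 2 := by
    rw [mul_pow, Real.sq_sqrt hE.le, Real.sq_sqrt hM.le]
    nlinarith [mul_le_mul_of_nonneg_left hME hE.le, sq_nonneg (c * E)]
  have hprod : √E * √M ≤ (1 + c) * E := abs_le_of_sq_le_sq' hsq (by positivity) |>.2
  have hrM : 0 < √M := Real.sqrt_pos.mpr hM
  rw [← sub_nonneg]
  have : c * (E / √M) - (√E - E / √M) = ((1 + c) * E - √E * √M) / √M := by
    field_simp
    ring
  rw [this]
  exact div_nonneg (by linarith) hrM.le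

/-- Asymptotic bipartite spread bound:
`s(n,e) − s_b(n,e) ≤ ((1 + 16 e^{−3/4})/e^{3/4}) s(n,e)` for `1 ≤ e ≤ ⌊n²/4⌋`. -/
theorem bipartite_spread_upper (n e : ℕ) (he1 : 1 ≤ e) (he2 : e ≤ n ^ 2 / 4) :
    spreadMaxNE n e - spreadMaxBipNE n e ≤
      ((1 + 16 * (e : ℝ) ^ (-(3 : ℝ) / 4)) / (e : ℝ) ^ ((3 : ℝ) / 4)) * spreadMaxNE n e := by
  set c := (1 + 16 * (e : ℝ) ^ (-(3 : ℝ) / 4)) / (e : ℝ) ^ ((3 : ℝ) / 4)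
  have he : (0 : ℝ) < e := by exact_mod_cast he1
  have hc : 0 ≤ c := by positivity
  obtain ⟨a, b, δ, hab, habe, hδ⟩ :=
    exists_add_le_mul_eq_add_pow_four_le (n := n) (e := e) (by omega)
  obtain ⟨G, s, t, rfl, rfl, hG, hGe⟩ := SimpleGraph.exists_isBipartiteWith_ncard_edgeSet_eq
    (V := Fin n) (by simpa using hab) (habe ▸ Nat.le_add_right e δ)
  have hst : 0 < #s * #t := by omega
  have hδc : (δ : ℝ) ≤ 2 * c * e := by
    have := le_two_mul_rpow_of_pow_four_le (Nat.cast_nonneg δ) he.le (by exact_mod_cast hδ)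
    have hroot : (e : ℝ) ^ ((1 : ℝ) / 4) ≤ c * e := rpow_one_div_four_le he
    linarith
  have hgap := sqrt_sub_div_sqrt_le (M := (#s : ℝ) * #t) he (by exact_mod_cast hst) hc
    (by rw [← Nat.cast_mul, habe]; push_cast; linarith)
  have hL := hGe ▸ le_spread_of_isBipartiteWith hG
    (card_pos.mp (Nat.pos_of_mul_pos_right hst)) (card_pos.mp (Nat.pos_of_mul_pos_left hst))
  have hmax := spreadMaxNE_le_two_sqrt n e
  have hbip := hL.trans (spread_le_spreadMaxBipNE hGe hG.isBipartite)
  have hlow := mul_le_mul_of_nonneg_left (hL.trans (spread_le_spreadMaxNE hGe)) hc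
  rw [mul_div_assoc] at hbip hlow
  linarith
end

section
/- There exist a constant c > 0 and N ∈ ℕ such that for all n ≥ N the following holds: if G is a simple graph on n vertices with s(G) = s(n) and z is a unit eigenvector of the adjacency matrix of G for the smallest eigenvalue λₙ(G), then |{u ∈ V(G) : z_u ≥ 0}| ≥ c·n and |{u ∈ V(G) : z_u < 0}| ≥ c·n. -/
/-!
The complete split graph `K_a ∨ K̄_b` with `b = ⌊n/3⌋` has spread at least `(n - 1) + n/10`, by the
Rayleigh quotients of two vectors that are constant on the two parts, while `λ₁ ≤ n - 1` for every
graph on `n` vertices. Hence a spread-extremal graph has `λₙ ≤ -n/10`.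

Write the unit bottom eigenvector as `z = z⁺ - z⁻`. Only edges between the two sign classes make
`λₙ = zᵀAz` negative, so `-λₙ ≤ 2 (∑ z⁺)(∑ z⁻)`, and by Cauchy–Schwarz `(∑ z⁺)² ≤ |{z ≥ 0}|` and
`(∑ z⁻)² ≤ |{z < 0}|`. Thus `n²/100 ≤ 4 |{z ≥ 0}| |{z < 0}|`, and since each factor is at most `n`,
each is at least `n/400`.
-/

open Matrix Finset

namespace Matrix.IsHermitian

variable {ι : Type*} [Fintype ι] [DecidableEq ι] {A : Matrix ι ι ℝ} (hA : A.IsHermitian)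

lemma dotProduct_mulVec_eq_sum_eigenvalues (x : ι → ℝ) :
    x ⬝ᵥ A *ᵥ x =
      ∑ i, hA.eigenvalues i * (star (hA.eigenvectorUnitary : Matrix ι ι ℝ) *ᵥ x) i ^ 2 := by
  set U : Matrix ι ι ℝ := (hA.eigenvectorUnitary : Matrix ι ι ℝ)
  have hA' : A *ᵥ x = U *ᵥ (diagonal hA.eigenvalues *ᵥ (star U *ᵥ x)) := by
    conv_lhs => rw [hA.spectral_theorem]
    simp [U, Unitary.conjStarAlgAut_apply, mulVec_mulVec, mul_assoc]
  rw [hA', dotProduct_mulVec, ← mulVec_transpose]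
  change (star U *ᵥ x) ⬝ᵥ _ = _
  simp only [dotProduct, mulVec_diagonal, sq]
  exact sum_congr rfl fun i _ => by ring

lemma sum_sq_star_eigenvectorUnitary_mulVec (x : ι → ℝ) :
    ∑ i, (star (hA.eigenvectorUnitary : Matrix ι ι ℝ) *ᵥ x) i ^ 2 = ∑ i, x i ^ 2 := by
  set U : Matrix ι ι ℝ := (hA.eigenvectorUnitary : Matrix ι ι ℝ)
  have hU : U * star U = 1 := Unitary.mul_star_self_of_mem hA.eigenvectorUnitary.2
  have hxU : x ᵥ* U = star U *ᵥ x := by rw [← mulVec_transpose]; rfl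
  simp only [sq, ← dotProduct.eq_1]
  rw [← hxU, ← dotProduct_mulVec, hxU, mulVec_mulVec, hU, one_mulVec]

lemma iInf_eigenvalues_mul_le [Nonempty ι] (x : ι → ℝ) :
    (⨅ i, hA.eigenvalues i) * ∑ i, x i ^ 2 ≤ x ⬝ᵥ A *ᵥ x := by
  rw [hA.dotProduct_mulVec_eq_sum_eigenvalues, ← hA.sum_sq_star_eigenvectorUnitary_mulVec,
    mul_sum]
  gcongr with i
  exact ciInf_le (Set.finite_range _).bddBelow i

lemma le_iSup_eigenvalues_mul [Nonempty ι] (x : ι → ℝ) :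
    x ⬝ᵥ A *ᵥ x ≤ (⨆ i, hA.eigenvalues i) * ∑ i, x i ^ 2 := by
  rw [hA.dotProduct_mulVec_eq_sum_eigenvalues, ← hA.sum_sq_star_eigenvectorUnitary_mulVec,
    mul_sum]
  gcongr with i
  exact le_ciSup (Set.finite_range _).bddAbove i

end Matrix.IsHermitian

lemma neg_mul_le_posPart_mul_negPart_add (a b : ℝ) : -(a * b) ≤ a⁺ * b⁻ + a⁻ * b⁺ := by
  rcases le_total 0 a with ha | ha <;> rcases le_total 0 b with hb | hb <;>
    simp only [posPart_eq_self.2, posPart_eq_zero.2, negPart_eq_zero.2, negPart_eq_neg.2, ha,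
      hb] <;>
    nlinarith

lemma sq_sum_le_card_mul_sum_sq_of_eq_zero {ι : Type*} [Fintype ι] {s : Finset ι} {f : ι → ℝ}
    (hf : ∀ i ∉ s, f i = 0) : (∑ i, f i) ^ 2 ≤ #s * ∑ i, f i ^ 2 := by
  rw [← sum_subset (subset_univ s) fun i _ hi => hf i hi]
  calc (∑ i ∈ s, f i) ^ 2 ≤ #s * ∑ i ∈ s, f i ^ 2 := sq_sum_le_card_mul_sum_sq (s := s) (f := f)
    _ ≤ #s * ∑ i, f i ^ 2 := by gcongr; exact subset_univ s

lemma sum_sum_ite_eq_sq_sum_sub {ι : Type*} [Fintype ι] [DecidableEq ι] (f : ι → ℝ) :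
    ∑ u, ∑ v, (if u = v then 0 else f u * f v) = (∑ u, f u) ^ 2 - ∑ u, f u ^ 2 := by
  have h : ∀ u v,
      (if u = v then 0 else f u * f v) = f u * f v - if u = v then f u * f v else 0 :=
    fun u v => by split_ifs <;> simp
  simp only [h, sum_sub_distrib, sum_ite_eq, mem_univ, if_true, sq, sum_mul_sum]

lemma dotProduct_mulVec_eq_of_mulVec_eq_smul {ι : Type*} [Fintype ι] {A : Matrix ι ι ℝ}
    {x : ι → ℝ} {μ : ℝ} (hx : ∑ i, x i ^ 2 = 1) (h : A *ᵥ x = μ • x) : x ⬝ᵥ A *ᵥ x = μ := by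
  have hxx : x ⬝ᵥ x = 1 := by rw [← hx]; simp only [dotProduct, sq]
  rw [h, dotProduct_smul, hxx, smul_eq_mul, mul_one]

section AdjacencyQuadraticForm

variable {n : ℕ} (G : SimpleGraph (Fin n))

lemma dotProduct_adjMat_mulVec_le (x : Fin n → ℝ) :
    x ⬝ᵥ adjMat G *ᵥ x ≤ ((n : ℝ) - 1) * ∑ u, x u ^ 2 := by
  have hcs : (∑ u, |x u|) ^ 2 ≤ n * ∑ u, x u ^ 2 := by
    simpa using sq_sum_le_card_mul_sum_sq (s := univ) (f := fun u => |x u|)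
  calc x ⬝ᵥ adjMat G *ᵥ x ≤ ∑ v, ∑ u, if v = u then 0 else |x v| * |x u| := by
        rw [dot_mulVec_eq_sum_sum]
        gcongr with v _ u _
        simp only [adjMat]
        split_ifs with hadj hvu
        · exact absurd hvu.symm (G.ne_of_adj hadj)
        · rw [mul_one, mul_comm |x v|, ← abs_mul]; exact le_abs_self _
        · simp
        · simp only [mul_zero, zero_mul]; positivity
    _ = (∑ u, |x u|) ^ 2 - ∑ u, x u ^ 2 := by simp only [sum_sum_ite_eq_sq_sum_sub, sq_abs]
    _ ≤ ((n : ℝ) - 1) * ∑ u, x u ^ 2 := by linarith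

lemma neg_dotProduct_adjMat_mulVec_le (z : Fin n → ℝ) :
    -(z ⬝ᵥ adjMat G *ᵥ z) ≤ 2 * (∑ u, (z u)⁺) * ∑ u, (z u)⁻ := by
  calc -(z ⬝ᵥ adjMat G *ᵥ z) = ∑ v, ∑ u, -(z u * adjMat G u v * z v) := by
        simp [dot_mulVec_eq_sum_sum]
    _ ≤ ∑ v, ∑ u, ((z u)⁺ * (z v)⁻ + (z u)⁻ * (z v)⁺) := by
        gcongr with v _ u _
        simp only [adjMat]
        split_ifs
        · simpa using neg_mul_le_posPart_mul_negPart_add (z u) (z v)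
        · simp only [mul_zero, zero_mul, neg_zero]; positivity
    _ = 2 * (∑ u, (z u)⁺) * ∑ u, (z u)⁻ := by
        simp only [sum_add_distrib, ← mul_sum, ← sum_mul]; ring

variable [NeZero n]

lemma lamMin_mul_le_dotProduct_adjMat_mulVec (x : Fin n → ℝ) :
    lamMin G * ∑ u, x u ^ 2 ≤ x ⬝ᵥ adjMat G *ᵥ x :=
  (adjMat_isHermitian G).iInf_eigenvalues_mul_le x

lemma dotProduct_adjMat_mulVec_le_lamMax_mul (x : Fin n → ℝ) :
    x ⬝ᵥ adjMat G *ᵥ x ≤ lamMax G * ∑ u, x u ^ 2 :=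
  (adjMat_isHermitian G).le_iSup_eigenvalues_mul x

lemma lamMax_le_sub_one : lamMax G ≤ n - 1 := by
  refine ciSup_le fun i => ?_
  set hA := adjMat_isHermitian G
  have hunit : ∑ u, hA.eigenvectorBasis i u ^ 2 = 1 := by
    rw [← EuclideanSpace.real_norm_sq_eq, hA.eigenvectorBasis.orthonormal.1 i, one_pow]
  have h := dotProduct_adjMat_mulVec_le G (hA.eigenvectorBasis i)
  rwa [dotProduct_mulVec_eq_of_mulVec_eq_smul hunit (hA.mulVec_eigenvectorBasis i), hunit,
    mul_one] at h

end AdjacencyQuadraticForm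

section CompleteSplitGraph

def completeSplitGraph (n a : ℕ) : SimpleGraph (Fin n) :=
  SimpleGraph.fromRel fun i _ => (i : ℕ) < a

def splitVec {n : ℕ} (a : ℕ) (p q : ℝ) : Fin n → ℝ := fun u => if (u : ℕ) < a then p else q

variable {n a : ℕ}

lemma sum_splitVec (ha : a ≤ n) (p q : ℝ) :
    ∑ u, splitVec (n := n) a p q u = a * p + (n - a) * q := by
  obtain ⟨k, rfl⟩ := Nat.exists_eq_add_of_le ha
  unfold splitVec
  rw [Fin.sum_univ_eq_sum_range (fun i => if i < a then p else q), sum_range_add,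
    sum_congr rfl fun i hi => if_pos (mem_range.1 hi)]
  simp

lemma splitVec_sq (p q : ℝ) (u : Fin n) :
    splitVec a p q u ^ 2 = splitVec a (p ^ 2) (q ^ 2) u := by
  unfold splitVec; split_ifs <;> rfl

lemma dotProduct_adjMat_completeSplitGraph_mulVec (ha : a ≤ n) (p q : ℝ) :
    splitVec a p q ⬝ᵥ adjMat (completeSplitGraph n a) *ᵥ splitVec a p q =
      a * (a - 1) * p ^ 2 + 2 * a * (n - a) * p * q := by
  set x : Fin n → ℝ := splitVec a p q
  set y : Fin n → ℝ := splitVec a 0 q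
  have hxy : ∀ u v, x u * adjMat (completeSplitGraph n a) u v * x v =
      (if v = u then 0 else x v * x u) - (if v = u then 0 else y v * y u) := by
    intro u v
    simp only [x, y, splitVec, adjMat, completeSplitGraph, SimpleGraph.fromRel_adj]
    rcases eq_or_ne v u with rfl | hvu
    · simp
    · by_cases hu : (u : ℕ) < a <;> by_cases hv : (v : ℕ) < a <;>
        simp [hu, hv, hvu, hvu.symm, mul_comm]
  simp only [dot_mulVec_eq_sum_sum, hxy, sum_sub_distrib, sum_sum_ite_eq_sq_sum_sub, x, y,
    splitVec_sq, sum_splitVec ha]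
  ring

end CompleteSplitGraph

lemma add_sub_one_add_div_ten_le_sub {A B M₁ M₂ : ℝ} (hB : 1 ≤ B) (hA : 2 * B ≤ A)
    (hA' : A ≤ 2 * B + 2) (h₁ : 16 * A * (A - 1) + 24 * A * B ≤ M₁ * (16 * A + 9 * B))
    (h₂ : M₂ * (100 * A + 729 * B) ≤ 100 * A * (A - 1) - 540 * A * B) :
    A + B - 1 + (A + B) / 10 ≤ M₁ - M₂ := by
  have hd₁ : 0 < 16 * A + 9 * B := by linarith
  have hd₂ : 0 < 100 * A + 729 * B := by linarith
  calc A + B - 1 + (A + B) / 10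
      ≤ (16 * A * (A - 1) + 24 * A * B) / (16 * A + 9 * B) -
          (100 * A * (A - 1) - 540 * A * B) / (100 * A + 729 * B) := by
        rw [div_sub_div _ _ hd₁.ne' hd₂.ne', le_div_iff₀ (by positivity)]
        obtain ⟨r, rfl⟩ : ∃ r, A = 2 * B + r := ⟨A - 2 * B, by ring⟩
        have hr : 0 ≤ r := by linarith
        have hr' : 0 ≤ 2 - r := by linarith
        have hB0 : 0 ≤ B := by linarith
        nlinarith [mul_nonneg (mul_nonneg hr hB0) hr', mul_nonneg (mul_nonneg hr hB0)
          (sub_nonneg.2 hB), mul_nonneg (mul_nonneg hr hr) hr', pow_nonneg hB0 3,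
          mul_nonneg hr (sq_nonneg B)]
    _ ≤ M₁ - M₂ := sub_le_sub ((div_le_iff₀ hd₁).2 h₁) ((le_div_iff₀ hd₂).2 h₂)

/- The test vectors approximate the eigenvectors `(1, √3 - 1)` and `(1, -√3 - 1)` of the quotient
matrix `n • !![2/3, 1/3; 2/3, 0]` of the split graph with `a = 2n/3`. -/
lemma le_spread_completeSplitGraph {n : ℕ} (hn : 3 ≤ n) :
    (n : ℝ) - 1 + n / 10 ≤ spread (completeSplitGraph n (n - n / 3)) := by
  have : NeZero n := ⟨by omega⟩
  set a := n - n / 3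
  set J := completeSplitGraph n a
  have ha : a ≤ n := Nat.sub_le n (n / 3)
  have hB : (n : ℝ) - a = (n / 3 : ℕ) := by rw [← Nat.cast_sub ha]; congr 1; omega
  have hB1 : (1 : ℝ) ≤ (n / 3 : ℕ) := by exact_mod_cast (by omega : 1 ≤ n / 3)
  have hA : 2 * ((n / 3 : ℕ) : ℝ) ≤ a := by exact_mod_cast (by omega : 2 * (n / 3) ≤ a)
  have hA' : (a : ℝ) ≤ 2 * (n / 3 : ℕ) + 2 := by exact_mod_cast (by omega : a ≤ 2 * (n / 3) + 2)
  have hmax := dotProduct_adjMat_mulVec_le_lamMax_mul J (splitVec a 4 3)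
  have hmin := lamMin_mul_le_dotProduct_adjMat_mulVec J (splitVec a 10 (-27))
  simp only [J, dotProduct_adjMat_completeSplitGraph_mulVec ha, splitVec_sq, sum_splitVec ha, hB]
    at hmax hmin
  have := add_sub_one_add_div_ten_le_sub (M₁ := lamMax J) (M₂ := lamMin J) hB1 hA hA'
    (by linarith) (by linarith)
  rw [spread]
  linarith

lemma posPart_sq_add_negPart_sq (a : ℝ) : a⁺ ^ 2 + a⁻ ^ 2 = a ^ 2 := by
  rcases le_total 0 a with ha | ha
  · simp [posPart_eq_self.2 ha, negPart_eq_zero.2 ha]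
  · simp [posPart_eq_zero.2 ha, negPart_eq_neg.2 ha]

lemma sq_dotProduct_adjMat_mulVec_le {n : ℕ} (G : SimpleGraph (Fin n)) {z : Fin n → ℝ}
    (hz : ∑ u, z u ^ 2 = 1) (hneg : z ⬝ᵥ adjMat G *ᵥ z ≤ 0) :
    (z ⬝ᵥ adjMat G *ᵥ z) ^ 2 ≤ 4 * #{u | 0 ≤ z u} * #{u | z u < 0} := by
  have hsq : ∑ u, (z u)⁺ ^ 2 + ∑ u, (z u)⁻ ^ 2 = 1 := by
    rw [← sum_add_distrib, ← hz]; simp only [posPart_sq_add_negPart_sq]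
  have hpos_sq : ∑ u, (z u)⁺ ^ 2 ≤ 1 := by
    linarith [sum_nonneg fun u (_ : u ∈ univ) => sq_nonneg (z u)⁻]
  have hneg_sq : ∑ u, (z u)⁻ ^ 2 ≤ 1 := by
    linarith [sum_nonneg fun u (_ : u ∈ univ) => sq_nonneg (z u)⁺]
  have hpos : (∑ u, (z u)⁺) ^ 2 ≤ #{u | 0 ≤ z u} :=
    (sq_sum_le_card_mul_sum_sq_of_eq_zero fun u hu =>
      posPart_eq_zero.2 (le_of_lt (by simpa using hu))).trans
      (mul_le_of_le_one_right (Nat.cast_nonneg _) hpos_sq)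
  have hneg : (∑ u, (z u)⁻) ^ 2 ≤ #{u | z u < 0} :=
    (sq_sum_le_card_mul_sum_sq_of_eq_zero fun u hu =>
      negPart_eq_zero.2 (by simpa using hu)).trans
      (mul_le_of_le_one_right (Nat.cast_nonneg _) hneg_sq)
  calc (z ⬝ᵥ adjMat G *ᵥ z) ^ 2 = (-(z ⬝ᵥ adjMat G *ᵥ z)) ^ 2 := (neg_sq _).symm
    _ ≤ (2 * (∑ u, (z u)⁺) * ∑ u, (z u)⁻) ^ 2 :=
        pow_le_pow_left₀ (by linarith) (neg_dotProduct_adjMat_mulVec_le G z) 2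
    _ = 4 * (∑ u, (z u)⁺) ^ 2 * (∑ u, (z u)⁻) ^ 2 := by ring
    _ ≤ 4 * #{u | 0 ≤ z u} * #{u | z u < 0} := by gcongr

lemma div_ten_le_neg_lamMin {n : ℕ} (hn : 3 ≤ n) {G : SimpleGraph (Fin n)}
    (hG : ∀ H : SimpleGraph (Fin n), spread H ≤ spread G) : (n : ℝ) / 10 ≤ -lamMin G := by
  have : NeZero n := ⟨by omega⟩
  have h₁ := le_spread_completeSplitGraph hn
  have h₂ := hG (completeSplitGraph n (n - n / 3))
  have h₃ := lamMax_le_sub_one G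
  have h₄ : spread G = lamMax G - lamMin G := rfl
  linarith

/-- In a spread-extremal graph, both the set of vertices where the bottom
eigenvector is nonnegative and the set where it is negative have linear size. -/
theorem spread_extremal_linear_parts :
    ∃ c : ℝ, 0 < c ∧ ∃ N : ℕ, ∀ n : ℕ, N ≤ n →
      ∀ G : SimpleGraph (Fin n), (∀ H : SimpleGraph (Fin n), spread H ≤ spread G) →
      ∀ z : Fin n → ℝ, (∑ u, z u ^ 2 = 1) →
        (adjMat G).mulVec z = lamMin G • z →
        c * n ≤ (({u : Fin n | 0 ≤ z u}).ncard : ℝ) ∧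
        c * n ≤ (({u : Fin n | z u < 0}).ncard : ℝ) := by
  refine ⟨1 / 400, by norm_num, 3, fun n hn G hG z hz hzG => ?_⟩
  have hform : z ⬝ᵥ adjMat G *ᵥ z = lamMin G := dotProduct_mulVec_eq_of_mulVec_eq_smul hz hzG
  have hgap := div_ten_le_neg_lamMin hn hG
  have hneg : z ⬝ᵥ adjMat G *ᵥ z ≤ 0 := by rw [hform]; linarith [(n.cast_nonneg : (0 : ℝ) ≤ n)]
  have hcard := sq_dotProduct_adjMat_mulVec_le G hz hneg
  rw [hform] at hcard
  have hP : (#{u | 0 ≤ z u} : ℝ) ≤ n := by exact_mod_cast card_le_univ _ |>.trans_eq (card_fin n)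
  have hM : (#{u | z u < 0} : ℝ) ≤ n := by exact_mod_cast card_le_univ _ |>.trans_eq (card_fin n)
  simp only [Set.ncard_eq_toFinset_card', Set.toFinset_ofPred]
  constructor <;> nlinarith
end

section
/- Let W₁, W₂ be graphons and let α₁, α₂ > 0 with α₁ + α₂ = 1. Define W : [0,1]² → [0,1] by W(x,y) := W₁(x/α₁, y/α₁) if x, y ∈ [0,α₁], W(x,y) := W₂((x−α₁)/α₂, (y−α₁)/α₂) if x, y ∈ (α₁,1], and W(x,y) := 0 otherwise. Then W is a graphon and spr(W) ≤ α₁·spr(W₁) + α₂·spr(W₂); moreover, if neither W₁ nor W₂ is zero almost everywhere, the inequality is strict. -/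
open MeasureTheory

/-- Lebesgue measure restricted to the unit square `[0,1]²`. -/
noncomputable def unitSq : Measure (ℝ × ℝ) :=
  volume.restrict (Set.Icc (0 : ℝ) 1 ×ˢ Set.Icc (0 : ℝ) 1)

/-- Lebesgue measure restricted to the unit interval `[0,1]`. -/
noncomputable def unitInt : Measure ℝ := volume.restrict (Set.Icc (0 : ℝ) 1)

/-- A graphon: a measurable function with values in `[0,1]` which is symmetric
almost everywhere on `[0,1]²`. -/
def IsGraphon (W : ℝ → ℝ → ℝ) : Prop :=
  Measurable (Function.uncurry W) ∧ (∀ x y, W x y ∈ Set.Icc (0 : ℝ) 1) ∧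
    (∀ᵐ p : ℝ × ℝ ∂unitSq, W p.1 p.2 = W p.2 p.1)

/-- A unit function of `L²[0,1]`: measurable with `∫₀¹ f² = 1`. -/
def IsUnitL2 (f : ℝ → ℝ) : Prop :=
  Measurable f ∧ (∫ x in Set.Icc (0 : ℝ) 1, (f x) ^ 2) = 1

/-- The quadratic form `∫₀¹∫₀¹ W(x,y) f(x) f(y) dx dy`. -/
noncomputable def quadForm (W : ℝ → ℝ → ℝ) (f : ℝ → ℝ) : ℝ :=
  ∫ x in Set.Icc (0 : ℝ) 1, ∫ y in Set.Icc (0 : ℝ) 1, W x y * f x * f y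

/-- `μ(W)`, the maximum eigenvalue of the kernel operator associated to `W`. -/
noncomputable def graphonMu (W : ℝ → ℝ → ℝ) : ℝ :=
  sSup {r : ℝ | ∃ f : ℝ → ℝ, IsUnitL2 f ∧ r = quadForm W f}

/-- `ν(W)`, the minimum eigenvalue of the kernel operator associated to `W`. -/
noncomputable def graphonNu (W : ℝ → ℝ → ℝ) : ℝ :=
  sInf {r : ℝ | ∃ f : ℝ → ℝ, IsUnitL2 f ∧ r = quadForm W f}

/-- The spread `spr(W) = μ(W) − ν(W)` of a graphon. -/
noncomputable def graphonSpr (W : ℝ → ℝ → ℝ) : ℝ := graphonMu W - graphonNu W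

/-- `f` is a `lam`-eigenfunction of the kernel operator of `W`. -/
def IsEigenfunction (W : ℝ → ℝ → ℝ) (lam : ℝ) (f : ℝ → ℝ) : Prop :=
  ∀ᵐ x ∂unitInt, (∫ y in Set.Icc (0 : ℝ) 1, W x y * f y) = lam * f x

/-!
Split `[0,1]` into `(0, α₁]` and `(α₁, 1]` and rescale both pieces to `[0,1]`. Since `W` vanishes
off the two diagonal blocks, for `g₁ u = f (α₁ u)` and `g₂ u = f (α₁ + α₂ u)`
`⟨W f, f⟩ = α₁² ⟨W₁ g₁, g₁⟩ + α₂² ⟨W₂ g₂, g₂⟩` and `‖f‖² = α₁ ‖g₁‖² + α₂ ‖g₂‖²`.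
So for a unit `f` the value `⟨W f, f⟩` lies between convex combinations of `α₁ ν(W₁), α₂ ν(W₂)`
and of `α₁ μ(W₁), α₂ μ(W₂)`, whence `μ(W) ≤ max (α₁ μ(W₁)) (α₂ μ(W₂))` and
`min (α₁ ν(W₁)) (α₂ ν(W₂)) ≤ ν(W)`. Every graphon has `ν ≤ 0 ≤ μ` (for `ν`, test against
normalised indicators of short intervals), so the maximum is at most the sum and the minimum at
least the sum; the first comparison is strict once both `μ(Wᵢ) > 0`, which holds when `Wᵢ` is
not a.e. zero (test against the constant function `1`).
-/

open Set Filter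

section BoundedKernel

variable {W : ℝ → ℝ → ℝ} {f : ℝ → ℝ} {S : Set ℝ}

theorem IsGraphon.nonneg (hW : IsGraphon W) (x y : ℝ) : 0 ≤ W x y :=
  (hW.2.1 x y).1

theorem IsGraphon.abs_le_one (hW : IsGraphon W) (x y : ℝ) : |W x y| ≤ 1 :=
  abs_le.2 ⟨by linarith [hW.nonneg x y], (hW.2.1 x y).2⟩

theorem quadForm_const_mul (c : ℝ) :
    quadForm W (fun x => c * f x) = c ^ 2 * quadForm W f := by
  simp only [quadForm, ← integral_const_mul]
  congr 1 with x
  congr 1 with y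
  ring

theorem abs_kernel_mul_mul_le (hW : ∀ x y, |W x y| ≤ 1) (x y : ℝ) :
    |W x y * f x * f y| ≤ |f x| * |f y| := by
  rw [abs_mul, abs_mul, mul_assoc]
  exact mul_le_of_le_one_left (by positivity) (hW x y)

theorem abs_integral_kernel_mul_mul_le (hW : ∀ x y, |W x y| ≤ 1) (hf : IntegrableOn f S)
    (x : ℝ) : |∫ y in S, W x y * f x * f y| ≤ |f x| * ∫ y in S, |f y| :=
  calc |∫ y in S, W x y * f x * f y| ≤ ∫ y in S, |W x y * f x * f y| :=
        abs_integral_le_integral_abs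
    _ ≤ ∫ y in S, |f x| * |f y| :=
        integral_mono_of_nonneg (ae_of_all _ fun _ => abs_nonneg _) (hf.abs.const_mul _)
          (ae_of_all _ fun y => abs_kernel_mul_mul_le hW x y)
    _ = |f x| * ∫ y in S, |f y| := integral_const_mul _ _

theorem integrableOn_kernel_mul_mul (hWm : Measurable (Function.uncurry W))
    (hW : ∀ x y, |W x y| ≤ 1) (hfm : Measurable f) (hf : IntegrableOn f S) (x : ℝ) :
    IntegrableOn (fun y => W x y * f x * f y) S :=
  Integrable.mono' (hf.abs.const_mul |f x|)
    (((hWm.comp measurable_prodMk_left).mul_const _).mul hfm).aestronglyMeasurable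
    (ae_of_all _ fun y => abs_kernel_mul_mul_le hW x y)

theorem integrableOn_integral_kernel_mul_mul (hWm : Measurable (Function.uncurry W))
    (hW : ∀ x y, |W x y| ≤ 1) (hfm : Measurable f) (hf : IntegrableOn f S) :
    IntegrableOn (fun x => ∫ y in S, W x y * f x * f y) S := by
  have hm : Measurable (fun p : ℝ × ℝ => W p.1 p.2 * f p.1 * f p.2) :=
    (hWm.mul (hfm.comp measurable_fst)).mul (hfm.comp measurable_snd)
  exact Integrable.mono' (hf.abs.mul_const _)
    hm.stronglyMeasurable.integral_prod_right'.aestronglyMeasurable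
    (ae_of_all _ (abs_integral_kernel_mul_mul_le hW hf))

theorem abs_quadForm_le (hW : ∀ x y, |W x y| ≤ 1) (hf : IntegrableOn f (Icc 0 1)) :
    |quadForm W f| ≤ (∫ x in Icc 0 1, |f x|) ^ 2 :=
  calc |quadForm W f| ≤ ∫ x in Icc 0 1, |∫ y in Icc 0 1, W x y * f x * f y| :=
        abs_integral_le_integral_abs
    _ ≤ ∫ x in Icc 0 1, |f x| * ∫ y in Icc 0 1, |f y| :=
        integral_mono_of_nonneg (ae_of_all _ fun _ => abs_nonneg _) (hf.abs.mul_const _)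
          (ae_of_all _ (abs_integral_kernel_mul_mul_le hW hf))
    _ = (∫ x in Icc 0 1, |f x|) ^ 2 := by rw [integral_mul_const, sq]

theorem quadForm_eq_zero_of_ae_eq_zero (hf : f =ᵐ[volume.restrict (Icc 0 1)] 0) :
    quadForm W f = 0 := by
  refine integral_eq_zero_of_ae (ae_of_all _ fun x => integral_eq_zero_of_ae ?_)
  filter_upwards [hf] with y hy
  simp [hy]

end BoundedKernel

section Spectral

variable {W : ℝ → ℝ → ℝ} {f : ℝ → ℝ}

theorem IsUnitL2.integrableOn_sq (hf : IsUnitL2 f) :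
    IntegrableOn (fun x => f x ^ 2) (Icc 0 1) := by
  -- a non-integrable square would have integral `0` rather than `1`
  by_contra h
  have h1 := hf.2
  rw [integral_undef h] at h1
  exact zero_ne_one h1

theorem IsUnitL2.integrableOn (hf : IsUnitL2 f) : IntegrableOn f (Icc 0 1) :=
  ((memLp_two_iff_integrable_sq hf.1.aestronglyMeasurable).2 hf.integrableOn_sq).integrable
    one_le_two

theorem IsUnitL2.integral_abs_le_one (hf : IsUnitL2 f) : ∫ x in Icc 0 1, |f x| ≤ 1 :=
  calc ∫ x in Icc 0 1, |f x| ≤ ∫ x in Icc 0 1, (f x ^ 2 + 1) / 2 :=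
        integral_mono hf.integrableOn.abs
          ((hf.integrableOn_sq.add (integrable_const 1)).div_const 2)
          fun x => by nlinarith [sq_nonneg (|f x| - 1), sq_abs (f x)]
    _ = 1 := by
        rw [integral_div, integral_add hf.integrableOn_sq (integrable_const 1), hf.2]
        norm_num

theorem isUnitL2_one : IsUnitL2 (fun _ => 1) :=
  ⟨measurable_const, by simp⟩

theorem abs_quadForm_le_one (hW : ∀ x y, |W x y| ≤ 1) (hf : IsUnitL2 f) :
    |quadForm W f| ≤ 1 :=
  (abs_quadForm_le hW hf.integrableOn).trans
    (pow_le_one₀ (integral_nonneg fun _ => abs_nonneg _) hf.integral_abs_le_one)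

theorem quadForm_le_graphonMu (hW : ∀ x y, |W x y| ≤ 1) (hf : IsUnitL2 f) :
    quadForm W f ≤ graphonMu W :=
  le_csSup ⟨1, by rintro _ ⟨g, hg, rfl⟩; exact (abs_le.1 (abs_quadForm_le_one hW hg)).2⟩
    ⟨f, hf, rfl⟩

theorem graphonNu_le_quadForm (hW : ∀ x y, |W x y| ≤ 1) (hf : IsUnitL2 f) :
    graphonNu W ≤ quadForm W f :=
  csInf_le ⟨-1, by rintro _ ⟨g, hg, rfl⟩; exact (abs_le.1 (abs_quadForm_le_one hW hg)).1⟩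
    ⟨f, hf, rfl⟩

theorem exists_isUnitL2_quadForm_eq (hfm : Measurable f)
    (hf : IntegrableOn (fun x => f x ^ 2) (Icc 0 1)) :
    ∃ g, IsUnitL2 g ∧ quadForm W f = (∫ x in Icc 0 1, f x ^ 2) * quadForm W g := by
  set s := ∫ x in Icc 0 1, f x ^ 2
  have hs0 : 0 ≤ s := integral_nonneg fun x => sq_nonneg (f x)
  rcases hs0.eq_or_lt with hs | hs
  · refine ⟨fun _ => 1, isUnitL2_one, ?_⟩
    have hf0 : f =ᵐ[volume.restrict (Icc 0 1)] 0 := by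
      filter_upwards [(integral_eq_zero_iff_of_nonneg (fun x => sq_nonneg (f x)) hf).1 hs.symm]
        with x hx
      exact pow_eq_zero_iff two_ne_zero |>.1 hx
    rw [quadForm_eq_zero_of_ae_eq_zero hf0, ← hs, zero_mul]
  · refine ⟨fun x => (√s)⁻¹ * f x, ⟨hfm.const_mul _, ?_⟩, ?_⟩
    · simp_rw [mul_pow, integral_const_mul, inv_pow, Real.sq_sqrt hs.le]
      exact inv_mul_cancel₀ hs.ne'
    · rw [quadForm_const_mul, inv_pow, Real.sq_sqrt hs.le, mul_inv_cancel_left₀ hs.ne']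

theorem quadForm_le_graphonMu_mul (hW : ∀ x y, |W x y| ≤ 1) (hfm : Measurable f)
    (hf : IntegrableOn (fun x => f x ^ 2) (Icc 0 1)) :
    quadForm W f ≤ (∫ x in Icc 0 1, f x ^ 2) * graphonMu W := by
  obtain ⟨g, hg, hfg⟩ := exists_isUnitL2_quadForm_eq (W := W) hfm hf
  rw [hfg]
  exact mul_le_mul_of_nonneg_left (quadForm_le_graphonMu hW hg)
    (integral_nonneg fun x => sq_nonneg (f x))

theorem mul_graphonNu_le_quadForm (hW : ∀ x y, |W x y| ≤ 1) (hfm : Measurable f)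
    (hf : IntegrableOn (fun x => f x ^ 2) (Icc 0 1)) :
    (∫ x in Icc 0 1, f x ^ 2) * graphonNu W ≤ quadForm W f := by
  obtain ⟨g, hg, hfg⟩ := exists_isUnitL2_quadForm_eq (W := W) hfm hf
  rw [hfg]
  exact mul_le_mul_of_nonneg_left (graphonNu_le_quadForm hW hg)
    (integral_nonneg fun x => sq_nonneg (f x))

theorem graphonMu_nonneg (hW₀ : ∀ x y, 0 ≤ W x y) (hW : ∀ x y, |W x y| ≤ 1) :
    0 ≤ graphonMu W :=
  (integral_nonneg fun x => integral_nonneg fun y => by simpa using hW₀ x y).trans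
    (quadForm_le_graphonMu hW isUnitL2_one)

theorem graphonNu_le_of_mem_Ioc (hW : ∀ x y, |W x y| ≤ 1) {ε : ℝ} (hε : ε ∈ Ioc 0 1) :
    graphonNu W ≤ ε := by
  obtain ⟨hε₀, hε₁⟩ := hε
  set c := (√ε)⁻¹
  have hI : ∀ b : ℝ, ∫ x in Icc 0 1, (Icc 0 ε).indicator (fun _ => b) x = b * ε := fun b => by
    rw [setIntegral_indicator measurableSet_Icc,
      inter_eq_self_of_subset_right (Icc_subset_Icc_right hε₁)]
    simp [hε₀.le, mul_comm]
  have hcomp : ∀ g : ℝ → ℝ, g 0 = 0 → ∀ x,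
      g ((Icc 0 ε).indicator (fun _ => c) x) = (Icc 0 ε).indicator (fun _ => g c) x :=
    fun g hg x => by by_cases hx : x ∈ Icc 0 ε <;> simp [hx, hg]
  have hunit : IsUnitL2 ((Icc 0 ε).indicator fun _ => c) := by
    refine ⟨measurable_const.indicator measurableSet_Icc, ?_⟩
    simp_rw [hcomp (· ^ 2) (zero_pow two_ne_zero), hI, c, inv_pow, Real.sq_sqrt hε₀.le]
    exact inv_mul_cancel₀ hε₀.ne'
  calc graphonNu W ≤ quadForm W ((Icc 0 ε).indicator fun _ => c) :=
        graphonNu_le_quadForm hW hunit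
    _ ≤ (∫ x in Icc 0 1, |(Icc 0 ε).indicator (fun _ => c) x|) ^ 2 :=
        (le_abs_self _).trans (abs_quadForm_le hW hunit.integrableOn)
    _ = ε := by
        simp_rw [hcomp abs abs_zero, hI]
        rw [mul_pow, sq_abs, inv_pow, Real.sq_sqrt hε₀.le]
        field_simp

theorem graphonNu_nonpos (hW : ∀ x y, |W x y| ≤ 1) : graphonNu W ≤ 0 :=
  le_of_forall_gt_imp_ge_of_dense fun ε hε =>
    (graphonNu_le_of_mem_Ioc hW ⟨lt_min hε one_pos, min_le_right ε 1⟩).trans (min_le_left ε 1)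

theorem unitSq_eq_prod :
    unitSq = (volume.restrict (Icc 0 1)).prod (volume.restrict (Icc 0 1)) := by
  rw [Measure.prod_restrict, unitSq, ← Measure.volume_eq_prod]

theorem graphonMu_pos (hWm : Measurable (Function.uncurry W))
    (hW₀ : ∀ x y, 0 ≤ W x y) (hW : ∀ x y, |W x y| ≤ 1)
    (hne : ¬∀ᵐ p : ℝ × ℝ ∂unitSq, W p.1 p.2 = 0) : 0 < graphonMu W := by
  rw [unitSq_eq_prod] at hne
  have hint : Integrable (fun p : ℝ × ℝ => W p.1 p.2)
      ((volume.restrict (Icc 0 1)).prod (volume.restrict (Icc 0 1))) :=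
    Integrable.mono' (integrable_const 1) hWm.aestronglyMeasurable
      (ae_of_all _ fun p => hW p.1 p.2)
  have hpos : 0 < quadForm W fun _ => 1 := by
    simp only [quadForm, mul_one]
    rw [← integral_prod _ hint]
    refine (integral_nonneg fun p => hW₀ p.1 p.2).lt_of_ne' fun h0 => hne ?_
    exact (integral_eq_zero_iff_of_nonneg (fun p : ℝ × ℝ => hW₀ p.1 p.2) hint).1 h0
  exact hpos.trans_le (quadForm_le_graphonMu hW isUnitL2_one)

end Spectral

section Rescaling

variable {a d : ℝ}

theorem integral_Ioc_eq_mul_integral_comp (ha : 0 < a) (g : ℝ → ℝ) :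
    ∫ x in Ioc d (d + a), g x = a * ∫ u in Icc 0 1, g (d + a * u) := by
  have h := intervalIntegral.smul_integral_comp_add_mul (a := 0) (b := 1) g a d
  rw [mul_zero, add_zero, mul_one, smul_eq_mul] at h
  rw [← intervalIntegral.integral_of_le (by linarith), ← h,
    intervalIntegral.integral_of_le zero_le_one, integral_Icc_eq_integral_Ioc]

theorem integrableOn_comp_add_mul {g : ℝ → ℝ} (ha : 0 < a)
    (hg : IntegrableOn g (Ioc d (d + a))) :
    IntegrableOn (fun u => g (d + a * u)) (Icc 0 1) := by
  have h : IntervalIntegrable g volume d (d + a) :=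
    (intervalIntegrable_iff_integrableOn_Ioc_of_le (by linarith)).2 hg
  have h' := (h.comp_add_left d).comp_mul_left (c := a)
  rw [sub_self, add_sub_cancel_left, zero_div, div_self ha.ne'] at h'
  exact (intervalIntegrable_iff_integrableOn_Icc_of_le zero_le_one).1 h'

theorem integral_Ioc_Ioc_eq_sq_mul_quadForm {W K : ℝ → ℝ → ℝ} {f : ℝ → ℝ}
    (ha : 0 < a) (hW : ∀ x ∈ Ioc d (d + a), ∀ y ∈ Ioc d (d + a),
      W x y = K ((x - d) / a) ((y - d) / a)) :
    ∫ x in Ioc d (d + a), ∫ y in Ioc d (d + a), W x y * f x * f y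
      = a ^ 2 * quadForm K (fun u => f (d + a * u)) := by
  have hK : ∫ x in Ioc d (d + a), ∫ y in Ioc d (d + a), W x y * f x * f y
      = ∫ x in Ioc d (d + a), ∫ y in Ioc d (d + a), K ((x - d) / a) ((y - d) / a) * f x * f y :=
    setIntegral_congr_fun measurableSet_Ioc fun x hx =>
      setIntegral_congr_fun measurableSet_Ioc fun y hy => by simp only [hW x hx y hy]
  have hψ : ∀ u, (d + a * u - d) / a = u := fun u => by field_simp; ring
  rw [hK, integral_Ioc_eq_mul_integral_comp ha]
  simp_rw [integral_Ioc_eq_mul_integral_comp ha (fun y => K _ ((y - d) / a) * _ * f y), hψ,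
    quadForm, integral_const_mul]
  ring

theorem integral_union_union_eq_add_of_offDiag_eq_zero {F : ℝ → ℝ → ℝ} {A B : Set ℝ}
    (hAB : Disjoint A B) (hA : MeasurableSet A) (hB : MeasurableSet B)
    (hF : ∀ x, IntegrableOn (F x) (A ∪ B))
    (hF' : IntegrableOn (fun x => ∫ y in A ∪ B, F x y) (A ∪ B))
    (hAB0 : ∀ x ∈ A, ∀ y ∈ B, F x y = 0) (hBA0 : ∀ x ∈ B, ∀ y ∈ A, F x y = 0) :
    ∫ x in A ∪ B, ∫ y in A ∪ B, F x y
      = (∫ x in A, ∫ y in A, F x y) + ∫ x in B, ∫ y in B, F x y := by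
  have hsplit : ∀ x, ∫ y in A ∪ B, F x y = (∫ y in A, F x y) + ∫ y in B, F x y := fun x =>
    setIntegral_union hAB hB (hF x).left_of_union (hF x).right_of_union
  rw [setIntegral_union hAB hB hF'.left_of_union hF'.right_of_union]
  congr 1
  · refine setIntegral_congr_fun hA fun x hx => ?_
    rw [hsplit, setIntegral_eq_zero_of_forall_eq_zero (hAB0 x hx), add_zero]
  · refine setIntegral_congr_fun hB fun x hx => ?_
    rw [hsplit, setIntegral_eq_zero_of_forall_eq_zero (hBA0 x hx), zero_add]

theorem integral_Icc_eq_add_integral_comp {g : ℝ → ℝ} {α₁ α₂ : ℝ} (hα₁ : 0 < α₁) (hα₂ : 0 < α₂)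
    (hsum : α₁ + α₂ = 1) (hg : IntegrableOn g (Icc 0 1)) :
    ∫ x in Icc 0 1, g x
      = α₁ * (∫ u in Icc 0 1, g (α₁ * u)) + α₂ * ∫ u in Icc 0 1, g (α₁ + α₂ * u) := by
  have h₁ := integral_Ioc_eq_mul_integral_comp (d := 0) hα₁ g
  have h₂ := integral_Ioc_eq_mul_integral_comp (d := α₁) hα₂ g
  simp only [zero_add] at h₁
  rw [hsum] at h₂
  have hg' := hg.mono_set Ioc_subset_Icc_self
  rw [integral_Icc_eq_integral_Ioc, ← Ioc_union_Ioc_eq_Ioc hα₁.le (by linarith), ← h₁, ← h₂,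
    setIntegral_union (Ioc_disjoint_Ioc_of_le le_rfl) measurableSet_Ioc
      (hg'.mono_set (Ioc_subset_Ioc_right (by linarith)))
      (hg'.mono_set (Ioc_subset_Ioc_left hα₁.le))]

end Rescaling

theorem quasiMeasurePreserving_smul_sub {E : Type*} [NormedAddCommGroup E] [NormedSpace ℝ E]
    [MeasurableSpace E] [BorelSpace E] [FiniteDimensional ℝ E] (μ : Measure E)
    [μ.IsAddHaarMeasure] {c : ℝ} (hc : c ≠ 0) (v : E) :
    Measure.QuasiMeasurePreserving (fun p => c • (p - v)) μ μ :=
  (Measure.quasiMeasurePreserving_smul μ hc).comp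
    (measurePreserving_sub_right μ v).quasiMeasurePreserving

structure IsGraphonDirectSum (W₁ W₂ : ℝ → ℝ → ℝ) (α₁ α₂ : ℝ) (W : ℝ → ℝ → ℝ) : Prop where
  eq_fst : ∀ x ∈ Icc 0 α₁, ∀ y ∈ Icc 0 α₁, W x y = W₁ (x / α₁) (y / α₁)
  eq_snd : ∀ x ∈ Ioc α₁ 1, ∀ y ∈ Ioc α₁ 1, W x y = W₂ ((x - α₁) / α₂) ((y - α₁) / α₂)
  eq_zero : ∀ x y, ¬(x ∈ Icc 0 α₁ ∧ y ∈ Icc 0 α₁) → ¬(x ∈ Ioc α₁ 1 ∧ y ∈ Ioc α₁ 1) →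
    W x y = 0

namespace IsGraphonDirectSum

variable {W₁ W₂ W : ℝ → ℝ → ℝ} {α₁ α₂ : ℝ} {f : ℝ → ℝ}

theorem eq_zero_of_le_of_lt (hD : IsGraphonDirectSum W₁ W₂ α₁ α₂ W) {x y : ℝ} (hx : x ≤ α₁)
    (hy : α₁ < y) : W x y = 0 :=
  hD.eq_zero x y (fun h => hy.not_ge h.2.2) (fun h => h.1.1.not_ge hx)

theorem eq_zero_of_lt_of_le (hD : IsGraphonDirectSum W₁ W₂ α₁ α₂ W) {x y : ℝ} (hx : α₁ < x)
    (hy : y ≤ α₁) : W x y = 0 :=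
  hD.eq_zero x y (fun h => hx.not_ge h.1.2) (fun h => h.2.1.not_ge hy)

theorem measurable (hD : IsGraphonDirectSum W₁ W₂ α₁ α₂ W)
    (h₁ : Measurable (Function.uncurry W₁)) (h₂ : Measurable (Function.uncurry W₂)) :
    Measurable (Function.uncurry W) := by
  have hW : Function.uncurry W = fun p : ℝ × ℝ =>
      if p.1 ∈ Icc 0 α₁ ∧ p.2 ∈ Icc 0 α₁ then W₁ (p.1 / α₁) (p.2 / α₁)
      else if p.1 ∈ Ioc α₁ 1 ∧ p.2 ∈ Ioc α₁ 1 then W₂ ((p.1 - α₁) / α₂) ((p.2 - α₁) / α₂)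
      else 0 := by
    ext ⟨x, y⟩
    split_ifs with hA hB
    · exact hD.eq_fst x hA.1 y hA.2
    · exact hD.eq_snd x hB.1 y hB.2
    · exact hD.eq_zero x y hA hB
  rw [hW]
  refine Measurable.ite ?_ ?_ (Measurable.ite ?_ ?_ measurable_const)
  · exact (measurableSet_Icc.preimage measurable_fst).inter
      (measurableSet_Icc.preimage measurable_snd)
  · exact h₁.comp ((measurable_fst.div_const α₁).prodMk (measurable_snd.div_const α₁))
  · exact (measurableSet_Ioc.preimage measurable_fst).inter
      (measurableSet_Ioc.preimage measurable_snd)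
  · exact h₂.comp (((measurable_fst.sub_const α₁).div_const α₂).prodMk
      ((measurable_snd.sub_const α₁).div_const α₂))

theorem mem_Icc (hD : IsGraphonDirectSum W₁ W₂ α₁ α₂ W) (h₁ : ∀ x y, W₁ x y ∈ Icc 0 1)
    (h₂ : ∀ x y, W₂ x y ∈ Icc 0 1) (x y : ℝ) : W x y ∈ Icc 0 1 := by
  by_cases hA : x ∈ Icc 0 α₁ ∧ y ∈ Icc 0 α₁
  · rw [hD.eq_fst x hA.1 y hA.2]; exact h₁ _ _
  by_cases hB : x ∈ Ioc α₁ 1 ∧ y ∈ Ioc α₁ 1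
  · rw [hD.eq_snd x hB.1 y hB.2]; exact h₂ _ _
  rw [hD.eq_zero x y hA hB]
  exact ⟨le_rfl, zero_le_one⟩

theorem ae_symm (hD : IsGraphonDirectSum W₁ W₂ α₁ α₂ W) (hα₁ : 0 < α₁) (hα₂ : 0 < α₂)
    (hsum : α₁ + α₂ = 1) (h₁ : ∀ᵐ p : ℝ × ℝ ∂unitSq, W₁ p.1 p.2 = W₁ p.2 p.1)
    (h₂ : ∀ᵐ p : ℝ × ℝ ∂unitSq, W₂ p.1 p.2 = W₂ p.2 p.1) :
    ∀ᵐ p : ℝ × ℝ ∂unitSq, W p.1 p.2 = W p.2 p.1 := by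
  have hsq : MeasurableSet (Icc (0 : ℝ) 1 ×ˢ Icc (0 : ℝ) 1) :=
    measurableSet_Icc.prod measurableSet_Icc
  rw [unitSq, ae_restrict_iff' hsq] at h₁ h₂ ⊢
  filter_upwards [(quasiMeasurePreserving_smul_sub volume (inv_ne_zero hα₁.ne') 0).ae h₁,
    (quasiMeasurePreserving_smul_sub volume (inv_ne_zero hα₂.ne') (α₁, α₁)).ae h₂]
    with ⟨x, y⟩ hp₁ hp₂ ⟨⟨hx₀, hx₁⟩, ⟨hy₀, hy₁⟩⟩
  simp only [sub_zero, Prod.smul_mk, Prod.mk_sub_mk, smul_eq_mul, ← div_eq_inv_mul,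
    mem_prod] at hp₁ hp₂
  rcases le_or_gt x α₁ with hx | hx <;> rcases le_or_gt y α₁ with hy | hy
  · rw [hD.eq_fst x ⟨hx₀, hx⟩ y ⟨hy₀, hy⟩, hD.eq_fst y ⟨hy₀, hy⟩ x ⟨hx₀, hx⟩]
    exact hp₁ ⟨⟨div_nonneg hx₀ hα₁.le, (div_le_one hα₁).2 hx⟩,
      ⟨div_nonneg hy₀ hα₁.le, (div_le_one hα₁).2 hy⟩⟩
  · rw [hD.eq_zero_of_le_of_lt hx hy, hD.eq_zero_of_lt_of_le hy hx]
  · rw [hD.eq_zero_of_lt_of_le hx hy, hD.eq_zero_of_le_of_lt hy hx]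
  · rw [hD.eq_snd x ⟨hx, hx₁⟩ y ⟨hy, hy₁⟩, hD.eq_snd y ⟨hy, hy₁⟩ x ⟨hx, hx₁⟩]
    exact hp₂ ⟨⟨div_nonneg (by linarith) hα₂.le, (div_le_one hα₂).2 (by linarith)⟩,
      ⟨div_nonneg (by linarith) hα₂.le, (div_le_one hα₂).2 (by linarith)⟩⟩

theorem isGraphon (hD : IsGraphonDirectSum W₁ W₂ α₁ α₂ W) (h₁ : IsGraphon W₁)
    (h₂ : IsGraphon W₂) (hα₁ : 0 < α₁) (hα₂ : 0 < α₂) (hsum : α₁ + α₂ = 1) : IsGraphon W :=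
  ⟨hD.measurable h₁.1 h₂.1, hD.mem_Icc h₁.2.1 h₂.2.1, hD.ae_symm hα₁ hα₂ hsum h₁.2.2 h₂.2.2⟩

theorem quadForm_eq (hD : IsGraphonDirectSum W₁ W₂ α₁ α₂ W)
    (hWm : Measurable (Function.uncurry W)) (hW : ∀ x y, |W x y| ≤ 1) (hα₁ : 0 < α₁)
    (hα₂ : 0 < α₂) (hsum : α₁ + α₂ = 1) (hfm : Measurable f) (hf : IntegrableOn f (Icc 0 1)) :
    quadForm W f = α₁ ^ 2 * quadForm W₁ (fun u => f (α₁ * u))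
      + α₂ ^ 2 * quadForm W₂ (fun u => f (α₁ + α₂ * u)) := by
  have hI : Ioc 0 α₁ ∪ Ioc α₁ 1 = Ioc 0 1 := Ioc_union_Ioc_eq_Ioc hα₁.le (by linarith)
  have hf' : IntegrableOn f (Ioc 0 α₁ ∪ Ioc α₁ 1) := hI ▸ hf.mono_set Ioc_subset_Icc_self
  have hblock₁ := integral_Ioc_Ioc_eq_sq_mul_quadForm (W := W) (K := W₁) (f := f) (d := 0) hα₁
    fun x hx y hy => by
      simpa using hD.eq_fst x (Ioc_subset_Icc_self (by simpa using hx))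
        y (Ioc_subset_Icc_self (by simpa using hy))
  have hblock₂ := integral_Ioc_Ioc_eq_sq_mul_quadForm (W := W) (K := W₂) (f := f) hα₂
    fun x hx y hy => hD.eq_snd x (hsum ▸ hx) y (hsum ▸ hy)
  simp only [zero_add] at hblock₁
  rw [hsum] at hblock₂
  have hsplit := integral_union_union_eq_add_of_offDiag_eq_zero
    (Ioc_disjoint_Ioc_of_le le_rfl) measurableSet_Ioc measurableSet_Ioc
    (integrableOn_kernel_mul_mul hWm hW hfm hf')
    (integrableOn_integral_kernel_mul_mul hWm hW hfm hf')
    (fun x hx y hy => by rw [hD.eq_zero_of_le_of_lt hx.2 hy.1, zero_mul, zero_mul])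
    (fun x hx y hy => by rw [hD.eq_zero_of_lt_of_le hx.1 hy.2, zero_mul, zero_mul])
  rw [hI, hblock₁, hblock₂] at hsplit
  simpa only [quadForm, integral_Icc_eq_integral_Ioc] using hsplit

theorem exists_quadForm_bounds (hD : IsGraphonDirectSum W₁ W₂ α₁ α₂ W) (h₁ : IsGraphon W₁)
    (h₂ : IsGraphon W₂) (hα₁ : 0 < α₁) (hα₂ : 0 < α₂) (hsum : α₁ + α₂ = 1) (hf : IsUnitL2 f) :
    ∃ t₁ t₂ : ℝ, 0 ≤ t₁ ∧ 0 ≤ t₂ ∧ t₁ + t₂ = 1 ∧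
      t₁ * (α₁ * graphonNu W₁) + t₂ * (α₂ * graphonNu W₂) ≤ quadForm W f ∧
      quadForm W f ≤ t₁ * (α₁ * graphonMu W₁) + t₂ * (α₂ * graphonMu W₂) := by
  set g₁ := fun u => f (α₁ * u)
  set g₂ := fun u => f (α₁ + α₂ * u)
  have hsq := hf.integrableOn_sq
  have hg₁ : IntegrableOn (fun u => g₁ u ^ 2) (Icc 0 1) := by
    simpa using integrableOn_comp_add_mul (d := 0) hα₁
      (hsq.mono_set (Ioc_subset_Icc_self.trans (Icc_subset_Icc_right (by linarith))))
  have hg₂ : IntegrableOn (fun u => g₂ u ^ 2) (Icc 0 1) :=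
    integrableOn_comp_add_mul hα₂ (hsq.mono_set (by
      rw [hsum]; exact Ioc_subset_Icc_self.trans (Icc_subset_Icc_left hα₁.le)))
  have hg₁m : Measurable g₁ := hf.1.comp (measurable_const_mul α₁)
  have hg₂m : Measurable g₂ := hf.1.comp ((measurable_const_mul α₂).const_add α₁)
  have hnorm := integral_Icc_eq_add_integral_comp hα₁ hα₂ hsum hsq
  have hW := hD.isGraphon h₁ h₂ hα₁ hα₂ hsum
  have hq := hD.quadForm_eq hW.1 hW.abs_le_one hα₁ hα₂ hsum hf.1 hf.integrableOn
  rw [hf.2] at hnorm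
  refine ⟨α₁ * ∫ u in Icc 0 1, g₁ u ^ 2, α₂ * ∫ u in Icc 0 1, g₂ u ^ 2,
    mul_nonneg hα₁.le (integral_nonneg fun _ => sq_nonneg _),
    mul_nonneg hα₂.le (integral_nonneg fun _ => sq_nonneg _), hnorm.symm, ?_, ?_⟩
  all_goals rw [hq]
  · calc _ = α₁ ^ 2 * ((∫ u in Icc 0 1, g₁ u ^ 2) * graphonNu W₁)
          + α₂ ^ 2 * ((∫ u in Icc 0 1, g₂ u ^ 2) * graphonNu W₂) := by ring
      _ ≤ _ := by
        gcongr
        · exact mul_graphonNu_le_quadForm h₁.abs_le_one hg₁m hg₁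
        · exact mul_graphonNu_le_quadForm h₂.abs_le_one hg₂m hg₂
  · calc _ ≤ α₁ ^ 2 * ((∫ u in Icc 0 1, g₁ u ^ 2) * graphonMu W₁)
          + α₂ ^ 2 * ((∫ u in Icc 0 1, g₂ u ^ 2) * graphonMu W₂) := by
          gcongr
          · exact quadForm_le_graphonMu_mul h₁.abs_le_one hg₁m hg₁
          · exact quadForm_le_graphonMu_mul h₂.abs_le_one hg₂m hg₂
      _ = _ := by ring

theorem graphonMu_le (hD : IsGraphonDirectSum W₁ W₂ α₁ α₂ W) (h₁ : IsGraphon W₁)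
    (h₂ : IsGraphon W₂) (hα₁ : 0 < α₁) (hα₂ : 0 < α₂) (hsum : α₁ + α₂ = 1) :
    graphonMu W ≤ max (α₁ * graphonMu W₁) (α₂ * graphonMu W₂) := by
  refine csSup_le ⟨_, _, isUnitL2_one, rfl⟩ ?_
  rintro _ ⟨f, hf, rfl⟩
  obtain ⟨t₁, t₂, ht₁, ht₂, ht, -, hle⟩ := hD.exists_quadForm_bounds h₁ h₂ hα₁ hα₂ hsum hf
  exact hle.trans (Convex.combo_le_max _ _ ht₁ ht₂ ht)

theorem le_graphonNu (hD : IsGraphonDirectSum W₁ W₂ α₁ α₂ W) (h₁ : IsGraphon W₁)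
    (h₂ : IsGraphon W₂) (hα₁ : 0 < α₁) (hα₂ : 0 < α₂) (hsum : α₁ + α₂ = 1) :
    min (α₁ * graphonNu W₁) (α₂ * graphonNu W₂) ≤ graphonNu W := by
  refine le_csInf ⟨_, _, isUnitL2_one, rfl⟩ ?_
  rintro _ ⟨f, hf, rfl⟩
  obtain ⟨t₁, t₂, ht₁, ht₂, ht, hle, -⟩ := hD.exists_quadForm_bounds h₁ h₂ hα₁ hα₂ hsum hf
  exact (Convex.min_le_combo _ _ ht₁ ht₂ ht).trans hle

end IsGraphonDirectSum

/-- The spread of a direct sum of two graphons is at most the weighted sum of their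
spreads, with strict inequality if neither summand vanishes almost everywhere. -/
theorem graphon_direct_sum_spread (W₁ W₂ : ℝ → ℝ → ℝ)
    (h₁ : IsGraphon W₁) (h₂ : IsGraphon W₂)
    (α₁ α₂ : ℝ) (hα₁ : 0 < α₁) (hα₂ : 0 < α₂) (hsum : α₁ + α₂ = 1)
    (W : ℝ → ℝ → ℝ)
    (hWa : ∀ x ∈ Set.Icc (0 : ℝ) α₁, ∀ y ∈ Set.Icc (0 : ℝ) α₁,
      W x y = W₁ (x / α₁) (y / α₁))
    (hWb : ∀ x ∈ Set.Ioc α₁ (1 : ℝ), ∀ y ∈ Set.Ioc α₁ (1 : ℝ),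
      W x y = W₂ ((x - α₁) / α₂) ((y - α₁) / α₂))
    (hWc : ∀ x y : ℝ, ¬(x ∈ Set.Icc (0 : ℝ) α₁ ∧ y ∈ Set.Icc (0 : ℝ) α₁) →
      ¬(x ∈ Set.Ioc α₁ (1 : ℝ) ∧ y ∈ Set.Ioc α₁ (1 : ℝ)) → W x y = 0) :
    IsGraphon W ∧
    graphonSpr W ≤ α₁ * graphonSpr W₁ + α₂ * graphonSpr W₂ ∧
    (¬(∀ᵐ p : ℝ × ℝ ∂unitSq, W₁ p.1 p.2 = 0) →
     ¬(∀ᵐ p : ℝ × ℝ ∂unitSq, W₂ p.1 p.2 = 0) →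
     graphonSpr W < α₁ * graphonSpr W₁ + α₂ * graphonSpr W₂) := by
  have hD : IsGraphonDirectSum W₁ W₂ α₁ α₂ W := ⟨hWa, hWb, hWc⟩
  have hW := hD.isGraphon h₁ h₂ hα₁ hα₂ hsum
  have hμ := hD.graphonMu_le h₁ h₂ hα₁ hα₂ hsum
  have hν := hD.le_graphonNu h₁ h₂ hα₁ hα₂ hsum
  have hμ₁ := mul_nonneg hα₁.le (graphonMu_nonneg h₁.nonneg h₁.abs_le_one)
  have hμ₂ := mul_nonneg hα₂.le (graphonMu_nonneg h₂.nonneg h₂.abs_le_one)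
  have hν₁ := mul_nonpos_of_nonneg_of_nonpos hα₁.le (graphonNu_nonpos h₁.abs_le_one)
  have hν₂ := mul_nonpos_of_nonneg_of_nonpos hα₂.le (graphonNu_nonpos h₂.abs_le_one)
  have hmin : α₁ * graphonNu W₁ + α₂ * graphonNu W₂
      ≤ min (α₁ * graphonNu W₁) (α₂ * graphonNu W₂) := le_min (by linarith) (by linarith)
  simp only [graphonSpr]
  refine ⟨hW, ?_, fun hne₁ hne₂ => ?_⟩
  · have hmax : max (α₁ * graphonMu W₁) (α₂ * graphonMu W₂)
        ≤ α₁ * graphonMu W₁ + α₂ * graphonMu W₂ := max_le (by linarith) (by linarith)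
    linarith
  · have hp₁ := mul_pos hα₁ (graphonMu_pos h₁.1 h₁.nonneg h₁.abs_le_one hne₁)
    have hp₂ := mul_pos hα₂ (graphonMu_pos h₂.1 h₂.nonneg h₂.abs_le_one hne₂)
    have hmax : max (α₁ * graphonMu W₁) (α₂ * graphonMu W₂)
        < α₁ * graphonMu W₁ + α₂ * graphonMu W₂ := max_lt (by linarith) (by linarith)
    linarith
end

section
/- For every integer n ≥ 5 and every natural number m with m ≤ ⌊n²/4⌋, there exist natural numbers p and q with p + q ≤ n, p·q ≥ m, and p·q − m ≤ √(2n−1) − 1. -/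
theorem bip_aux : ∀ n : ℕ, 1 ≤ n → ∀ m : ℕ, m ≤ n ^ 2 / 4 →
    ∃ p q : ℕ, p + q ≤ n ∧ m ≤ p * q ∧
      (p * q : ℝ) - m ≤ Real.sqrt (2 * n - 1) - 1 := by
  intro n
  induction n using Nat.strong_induction_on with
  | _ n ih =>
    intro hn m hm
    have hsq : n ^ 2 / 4 * 4 ≤ n ^ 2 := Nat.div_mul_le_self _ 4
    have h4m : 4 * m ≤ n ^ 2 := by omega
    by_cases hA : n ^ 2 + 1 ≤ 4 * m + 2 * n
    · -- dense case: D = n² - 4m ≤ 2n - 1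
      set D := n ^ 2 - 4 * m with hD
      have hDn : D + 4 * m = n ^ 2 := by omega
      have hD2 : D + 1 ≤ 2 * n := by omega
      set u := Nat.sqrt D with hu
      have hu1 : u * u ≤ D := by
        have h := Nat.sqrt_le' D
        rwa [pow_two] at h
      have hu2 : D < (u + 1) * (u + 1) := by
        have h := Nat.lt_succ_sqrt' D
        rwa [Nat.succ_eq_add_one, pow_two] at h
      have hu2' : (u + 1) * (u + 1) = u * u + 2 * u + 1 := by ring
      have hpar : n ^ 2 % 2 = n % 2 := by
        have h2 : n ^ 2 = n * n := sq n
        have h := Nat.mul_mod n n 2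
        rcases Nat.mod_two_eq_zero_or_one n with h0 | h0 <;> rw [h2, h, h0]
      have hDpar : D % 2 = n % 2 := by omega
      -- choose c ≤ u with c ≡ n (mod 2)
      obtain ⟨c, hcpar, hcase⟩ :
          ∃ c : ℕ, c % 2 = n % 2 ∧
            ((c = u ∧ c * c = u * u) ∨ (c + 1 = u ∧ u * u = c * c + 2 * c + 1)) := by
        by_cases hc : u % 2 = n % 2
        · exact ⟨u, hc, Or.inl ⟨rfl, rfl⟩⟩
        · have hu0 : u ≠ 0 := by
            intro h0
            rw [h0] at hu2
            have : D = 0 := by omega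
            omega
          obtain ⟨v, hv⟩ : ∃ v : ℕ, u = v + 1 := ⟨u - 1, by omega⟩
          refine ⟨v, by omega, Or.inr ⟨by omega, by rw [hv]; ring⟩⟩
      have hccD : c * c ≤ D := by rcases hcase with ⟨h1, h2⟩ | ⟨h1, h2⟩ <;> omega
      -- c ≤ n
      have hDnn : D ≤ n ^ 2 := by omega
      have hun : u ≤ n := by
        have h := Nat.sqrt_le_sqrt hDnn
        rwa [Nat.sqrt_eq' n] at h
      have hcn : c ≤ n := by rcases hcase with ⟨h1, _⟩ | ⟨h1, _⟩ <;> omega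
      obtain ⟨b, hb⟩ : ∃ b : ℕ, n = c + 2 * b := ⟨(n - c) / 2, by omega⟩
      have hpq4 : 4 * (b * (b + c)) + c * c = n ^ 2 := by rw [hb]; ring
      have hmle : m ≤ b * (b + c) := by omega
      set g := b * (b + c) - m with hg
      have hg4 : 4 * g + c * c = D := by omega
      have hgu : g = 0 ∨ g + 1 ≤ u := by
        rcases hcase with ⟨h1, h2⟩ | ⟨h1, h2⟩ <;> omega
      -- real estimates
      have h2n1 : (1 : ℝ) ≤ 2 * (n : ℝ) - 1 := by
        have : (1 : ℕ) ≤ n := hn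
        have : (1 : ℝ) ≤ (n : ℝ) := by exact_mod_cast this
        linarith
      have hone : (1 : ℝ) ≤ Real.sqrt (2 * n - 1) := by
        calc (1 : ℝ) = Real.sqrt 1 := Real.sqrt_one.symm
          _ ≤ Real.sqrt (2 * n - 1) := Real.sqrt_le_sqrt h2n1
      have husqrt : (u : ℝ) ≤ Real.sqrt (2 * n - 1) := by
        have huD : (u * u : ℕ) + 1 ≤ 2 * n := by omega
        have h1 : ((u : ℝ)) ^ 2 ≤ 2 * (n : ℝ) - 1 := by
          have : ((u * u : ℕ) : ℝ) + 1 ≤ 2 * (n : ℝ) := by exact_mod_cast huD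
          push_cast at this
          nlinarith
        calc (u : ℝ) = Real.sqrt ((u : ℝ) ^ 2) := (Real.sqrt_sq (by positivity)).symm
          _ ≤ Real.sqrt (2 * n - 1) := Real.sqrt_le_sqrt h1
      refine ⟨b, b + c, by omega, hmle, ?_⟩
      have hnat : b * (b + c) = m + g := by omega
      have hgR : (g : ℝ) ≤ Real.sqrt (2 * n - 1) - 1 := by
        rcases hgu with h0 | h1
        · rw [h0]; push_cast; linarith
        · have : (g : ℝ) + 1 ≤ (u : ℝ) := by exact_mod_cast h1
          linarith
      have hcast : (b : ℝ) * ((b : ℝ) + (c : ℝ)) = (m : ℝ) + (g : ℝ) := by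
        exact_mod_cast congrArg (Nat.cast : ℕ → ℝ) hnat
      push_cast
      linarith
    · -- sparse case: recurse on n - 1
      have hn2 : 2 ≤ n := by
        by_contra h
        have hn1 : n = 1 := by omega
        rw [hn1] at hA
        norm_num at hA
      have hexp : (n - 1) ^ 2 + 2 * n = n ^ 2 + 1 := by
        obtain ⟨a, rfl⟩ : ∃ a : ℕ, n = a + 1 := ⟨n - 1, by omega⟩
        simp only [Nat.add_sub_cancel]
        ring
      have hm' : m ≤ (n - 1) ^ 2 / 4 := by omega
      obtain ⟨p, q, h1, h2, h3⟩ := ih (n - 1) (by omega) (by omega) m hm'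
      refine ⟨p, q, by omega, h2, ?_⟩
      have hcast : ((n - 1 : ℕ) : ℝ) = (n : ℝ) - 1 := by
        have : (1 : ℕ) ≤ n := hn
        push_cast [this]
        ring
      have hmono : Real.sqrt (2 * ((n - 1 : ℕ) : ℝ) - 1) ≤ Real.sqrt (2 * n - 1) := by
        apply Real.sqrt_le_sqrt
        rw [hcast]
        linarith
      linarith

/-- For `n ≥ 5` and `m ≤ ⌊n²/4⌋`, there is a complete bipartite graph `K_{p,q}` on at
most `n` vertices with at least `m` edges and `p·q − m ≤ √(2n−1) − 1`. -/
theorem complete_bipartite_size_gap (n : ℕ) (hn : 5 ≤ n) (m : ℕ) (hm : m ≤ n ^ 2 / 4) :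
    ∃ p q : ℕ, p + q ≤ n ∧ m ≤ p * q ∧
      (p * q : ℝ) - m ≤ Real.sqrt (2 * n - 1) - 1 := by
  exact bip_aux n (by omega) m hm
end
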